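/- Let F̃_m be the class of densities f̃(x,y) = f(x)·1{y=1} + (1-f(x))·1{y=0} on [0,1] × {0,1} (with respect to Lebesgue × counting measure), where f : [0,1] → [0,1] is a step function with at most m-1 change-points. Then for any δ > 0 the δ-upper bracketing entropy of F̃_m is at most (2m-1)·log(⌈m/δ⌉). -/

import Mathlib

open MeasureTheory Set

/-- The dominating measure on `[0,1] × {0,1}`: Lebesgue measure on `[0,1]` times counting
measure on the two labels. -/
noncomputable def nuMeas : Measure (ℝ × Bool) :=
  (volume.restrict (Icc (0:ℝ) 1)).prod Measure.count

/-- The binary-regression density associated to a regression function `f`. -/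
def ftilde (f : ℝ → ℝ) : ℝ × Bool → ℝ :=
  fun z => if z.2 then f z.1 else 1 - f z.1

/-- `f` is a step function on `[0,1]` with exactly `k` pieces (at most `k-1` change-points). -/
def IsStepWith (k : ℕ) (f : ℝ → ℝ) : Prop :=
  ∃ p : Fin (k + 1) → ℝ, Monotone p ∧ p 0 = 0 ∧ p (Fin.last k) = 1 ∧
    ∀ i : Fin k, ∀ x ∈ Ioo (p i.castSucc) (p i.succ), ∀ y ∈ Ioo (p i.castSucc) (p i.succ),
      f x = f y

/-! Round each of the `m - 1` change-points of `f` to a grid cell `[k/N, (k+1)/N)`, with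
`N = ⌈m/δ⌉`, and each of its `m` values `a` to a grid interval `k/N ≤ a ≤ (k+1)/N`. The upper
bracket is `1` on the chosen cells, of total length at most `(m-1)/N`; elsewhere it takes the
values `(k+1)/N` at label `1` and `1 - k/N` at label `0` on the piece where `f` has value in
`[k/N, (k+1)/N]`. The two labels sum to `1 + 1/N` there, so the integral is at most
`1 + m/N ≤ 1 + δ`. Off the chosen cells, rounding the change-points does not change which piece
a point lies in, so this is an upper bracket; there are `N ^ (2m-1)` choices of cells and values. -/
open scoped Finset

lemma IsStepWith.mono {k n : ℕ} {f : ℝ → ℝ} (hf : IsStepWith k f) (hkn : k ≤ n) :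
    IsStepWith n f := by
  obtain ⟨p, hp, hp0, hp1, hpc⟩ := hf
  refine ⟨fun i => p ⟨min i k, by omega⟩, fun i i' h => hp (Fin.mk_le_mk.2 (min_le_min_right _ h)),
    by simpa using hp0, by convert hp1 using 2; ext; simp [hkn], fun i => ?_⟩
  by_cases hik : (i : ℕ) < k
  · simpa [Nat.succ_le_of_lt hik, hik.le] using hpc ⟨i, hik⟩
  · simp [show k ≤ (i : ℕ) + 1 by omega, show k ≤ (i : ℕ) by omega]

namespace StepBracket

noncomputable def pieceIndex {n : ℕ} (c : Fin n → ℝ) (x : ℝ) : Fin (n + 1) :=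
  ⟨#{j | c j ≤ x}, Nat.lt_succ_of_le ((Finset.card_filter_le _ _).trans_eq (Finset.card_fin n))⟩

lemma pieceIndex_congr {n : ℕ} {c c' : Fin n → ℝ} {x : ℝ} (h : ∀ j, c j ≤ x ↔ c' j ≤ x) :
    pieceIndex c x = pieceIndex c' x :=
  Fin.ext <| congrArg Finset.card (Finset.filter_congr (s := Finset.univ) fun j _ => h j)

lemma monotone_pieceIndex {n : ℕ} (c : Fin n → ℝ) : Monotone (pieceIndex c) :=
  fun _ _ hxy => Fin.mk_le_mk.2 <| Finset.card_le_card <|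
    Finset.monotone_filter_right _ fun _ _ hj => hj.trans hxy

lemma pieceIndex_eq_of_mem_Ioo {n : ℕ} {P : Fin (n + 2) → ℝ} (hP : Monotone P) {i : Fin (n + 1)}
    {x : ℝ} (hx : x ∈ Ioo (P i.castSucc) (P i.succ)) :
    pieceIndex (fun j : Fin n => P j.succ.castSucc) x = i := by
  have key : ∀ j : Fin n, P j.succ.castSucc ≤ x ↔ (j : ℕ) < i := by
    refine fun j => ⟨fun h => ?_, fun h => (hP ?_).trans hx.1.le⟩
    · by_contra hji
      exact (hx.2.trans_le (hP (Fin.le_def.2 (by simp; omega)))).not_ge h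
    · exact Fin.le_def.2 (by simp; omega)
  ext
  simp only [pieceIndex, Finset.filter_congr fun j _ => key j, Fin.card_filter_val_lt]
  omega

lemma exists_mem_Ioo_of_notMem_range {n : ℕ} {P : Fin (n + 1) → ℝ} (hP : Monotone P) {x : ℝ}
    (hx : x ∈ Icc (P 0) (P (Fin.last n))) (hxP : x ∉ range P) :
    ∃ i : Fin n, x ∈ Ioo (P i.castSucc) (P i.succ) := by
  induction n with
  | zero => exact absurd ⟨0, le_antisymm hx.1 hx.2⟩ hxP
  | succ n ih =>
    by_cases hlt : x < P (Fin.last n).castSucc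
    · obtain ⟨i, hi⟩ := ih (hP.comp Fin.strictMono_castSucc.monotone) ⟨hx.1, hlt.le⟩
        fun ⟨j, hj⟩ => hxP ⟨_, hj⟩
      exact ⟨i.castSucc, by rw [Fin.succ_castSucc]; exact hi⟩
    · exact ⟨Fin.last n, lt_of_le_of_ne (not_lt.1 hlt) fun h => hxP ⟨_, h⟩,
        lt_of_le_of_ne hx.2 fun h => hxP ⟨_, h.symm⟩⟩

lemma exists_grid_cell {N : ℕ} (hN : 0 < N) {a : ℝ} (ha : a ∈ Icc (0 : ℝ) 1) :
    ∃ k : Fin N, (k : ℝ) / N ≤ a ∧ a ≤ (k + 1) / N := by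
  have hN' : (0 : ℝ) < N := Nat.cast_pos.2 hN
  rcases ha.2.lt_or_eq with ha1 | rfl
  · have hfloor : ⌊a * N⌋₊ < N := (Nat.floor_lt (by nlinarith [ha.1])).2 (by nlinarith)
    refine ⟨⟨⌊a * N⌋₊, hfloor⟩, ?_, ?_⟩
    · rw [div_le_iff₀ hN']; exact Nat.floor_le (by nlinarith [ha.1])
    · rw [le_div_iff₀ hN']; exact (Nat.lt_floor_add_one _).le
  · refine ⟨⟨N - 1, by omega⟩, ?_, ?_⟩
    · exact div_le_one_of_le₀ (by simp) hN'.le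
    · rw [Nat.cast_sub hN, Nat.cast_one, sub_add_cancel, div_self hN'.ne']

def gridCells {n : ℕ} (N : ℕ) (q : Fin n → Fin N) : Set ℝ :=
  ⋃ j, Ico ((q j : ℝ) / N) ((q j + 1) / N)

open scoped Classical in
noncomputable def upperBracket {n : ℕ} (N : ℕ) (q : Fin n → Fin N) (v : Fin (n + 1) → Fin N) :
    ℝ × Bool → ℝ := fun z =>
  if z.1 ∈ gridCells N q then 1
  else
    let k : ℝ := v (pieceIndex (fun j => (q j : ℝ) / N) z.1)
    if z.2 then (k + 1) / N else 1 - k / N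

section upperBracket

variable {n N : ℕ} (q : Fin n → Fin N) (v : Fin (n + 1) → Fin N)

lemma measurableSet_gridCells : MeasurableSet (gridCells N q) :=
  MeasurableSet.iUnion fun _ => measurableSet_Ico

lemma volume_gridCells_le : volume (gridCells N q) ≤ ENNReal.ofReal (n / N) := by
  calc volume (gridCells N q) ≤ ∑ j, volume (Ico ((q j : ℝ) / N) ((q j + 1) / N)) :=
        measure_iUnion_fintype_le _ _
    _ = ∑ _j : Fin n, ENNReal.ofReal (1 / N) := by simp [Real.volume_Ico, add_div]
    _ = ENNReal.ofReal (n / N) := by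
        rw [Finset.sum_const, Finset.card_univ, Fintype.card_fin, nsmul_eq_mul,
          ← ENNReal.ofReal_natCast, ← ENNReal.ofReal_mul (by positivity), mul_one_div]

lemma measurable_upperBracket : Measurable (upperBracket N q v) := by
  refine Measurable.ite (measurableSet_gridCells q |>.preimage measurable_fst) measurable_const ?_
  exact (measurable_of_finite fun p : Fin (n + 1) × Bool =>
      if p.2 then ((v p.1 : ℝ) + 1) / N else 1 - (v p.1 : ℝ) / N).comp
    (((monotone_pieceIndex _).measurable.comp measurable_fst).prodMk measurable_snd)

lemma upperBracket_mem_Icc (hN : 0 < N) (z : ℝ × Bool) : upperBracket N q v z ∈ Icc 0 1 := by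
  have hN' : (0 : ℝ) < N := Nat.cast_pos.2 hN
  set k := v (pieceIndex (fun j => (q j : ℝ) / N) z.1)
  have hk : (k : ℝ) + 1 ≤ N := by exact_mod_cast k.isLt
  have hk0 : (0 : ℝ) ≤ k / N := by positivity
  unfold upperBracket
  split_ifs
  · simp
  · exact ⟨by positivity, (div_le_one hN').2 hk⟩
  · refine ⟨?_, by linarith⟩
    rw [sub_nonneg, div_le_one hN']
    linarith

lemma upperBracket_true_add_false_le (hN : 0 < N) (x : ℝ) :
    upperBracket N q v (x, true) + upperBracket N q v (x, false) ≤
      1 + 1 / N + (gridCells N q).indicator 1 x := by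
  have hN' : (0 : ℝ) < N := Nat.cast_pos.2 hN
  by_cases hx : x ∈ gridCells N q
  · simp only [upperBracket, hx, if_true, indicator_of_mem, Pi.one_apply]
    have : (0 : ℝ) ≤ 1 / N := by positivity
    linarith
  · simp only [upperBracket, hx, if_false, if_true, indicator_of_notMem hx, Bool.false_eq_true]
    apply le_of_eq
    field_simp
    ring

end upperBracket

lemma integral_nuMeas {g : ℝ × Bool → ℝ} (hg : Integrable g nuMeas) :
    ∫ z, g z ∂nuMeas = ∫ x in Icc 0 1, (g (x, true) + g (x, false)) := by
  rw [nuMeas, integral_prod _ hg]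
  simp

lemma ae_nuMeas_of_ae_Icc {p : ℝ × Bool → Prop}
    (h : ∀ᵐ x ∂volume.restrict (Icc (0 : ℝ) 1), ∀ b, p (x, b)) : ∀ᵐ z ∂nuMeas, p z :=
  (Measure.quasiMeasurePreserving_fst.ae h).mono fun z hz => hz z.2

instance : IsFiniteMeasure nuMeas := by
  unfold nuMeas
  infer_instance

lemma integral_upperBracket_le {n N : ℕ} (hN : 0 < N) (q : Fin n → Fin N)
    (v : Fin (n + 1) → Fin N) : ∫ z, upperBracket N q v z ∂nuMeas ≤ 1 + (n + 1) / N := by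
  have hbound : ∀ z, ‖upperBracket N q v z‖ ≤ 1 := fun z => by
    obtain ⟨h0, h1⟩ := upperBracket_mem_Icc q v hN z
    rwa [Real.norm_of_nonneg h0]
  have hmeas := measurable_upperBracket q v
  have hint : Integrable (upperBracket N q v) nuMeas :=
    .of_bound hmeas.aestronglyMeasurable 1 (ae_of_all _ hbound)
  have hint_label (b : Bool) :
      Integrable (fun x => upperBracket N q v (x, b)) (volume.restrict (Icc 0 1)) :=
    .of_bound (hmeas.comp measurable_prodMk_right).aestronglyMeasurable 1
      (ae_of_all _ fun x => hbound (x, b))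
  have hcells : Integrable ((gridCells N q).indicator (1 : ℝ → ℝ)) (volume.restrict (Icc 0 1)) :=
    (integrable_const 1).indicator (measurableSet_gridCells q)
  have hcells_real : (volume.restrict (Icc (0 : ℝ) 1)).real (gridCells N q) ≤ n / N :=
    ENNReal.toReal_le_of_le_ofReal (by positivity)
      ((Measure.restrict_apply_le _ _).trans (volume_gridCells_le q))
  rw [integral_nuMeas hint]
  calc ∫ x in Icc 0 1, (upperBracket N q v (x, true) + upperBracket N q v (x, false))
      ≤ ∫ x in Icc 0 1, (1 + 1 / (N : ℝ) + (gridCells N q).indicator 1 x) :=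
        integral_mono ((hint_label true).add (hint_label false))
          ((integrable_const _).add hcells) (upperBracket_true_add_false_le q v hN)
    _ = 1 + 1 / N + (volume.restrict (Icc 0 1)).real (gridCells N q) := by
        rw [integral_add (integrable_const (1 + 1 / (N : ℝ))) hcells, integral_const,
          integral_indicator_one (measurableSet_gridCells q)]
        simp
    _ ≤ 1 + 1 / N + n / N := by gcongr
    _ = 1 + (n + 1) / N := by ring

lemma exists_upperBracket_ae_ge {n N : ℕ} (hN : 0 < N) {f : ℝ → ℝ} (hf : IsStepWith (n + 1) f)
    (hf01 : ∀ x ∈ Icc (0 : ℝ) 1, f x ∈ Icc (0 : ℝ) 1) :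
    ∃ q : Fin n → Fin N, ∃ v : Fin (n + 1) → Fin N,
      ∀ᵐ z ∂nuMeas, ftilde f z ≤ upperBracket N q v z := by
  obtain ⟨P, hP, hP0, hP1, hPf⟩ := hf
  have hP01 (i : Fin (n + 2)) : P i ∈ Icc (0 : ℝ) 1 :=
    ⟨hP0 ▸ hP (Fin.zero_le i), hP1 ▸ hP (Fin.le_last i)⟩
  set mid : Fin (n + 1) → ℝ := fun i => (P i.castSucc + P i.succ) / 2
  choose q hq using fun j : Fin n => exists_grid_cell hN (hP01 j.succ.castSucc)
  choose v hv using fun i : Fin (n + 1) => exists_grid_cell hN <| hf01 (mid i) <| by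
    simp only [mid, mem_Icc]
    constructor <;>
      linarith [(hP01 i.castSucc).1, (hP01 i.succ).1, (hP01 i.castSucc).2, (hP01 i.succ).2]
  refine ⟨q, v, ae_nuMeas_of_ae_Icc ?_⟩
  filter_upwards [ae_restrict_mem measurableSet_Icc, (countable_range P).ae_notMem _]
    with x hx hxP b
  by_cases hcell : x ∈ gridCells N q
  · have := hf01 x hx
    cases b <;> simp [ftilde, upperBracket, hcell] <;> linarith [this.1, this.2]
  obtain ⟨i, hi⟩ := exists_mem_Ioo_of_notMem_range hP (by rwa [hP0, hP1]) hxP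
  -- Off the grid cells, a grid point `q j / N` lies below `x` iff the breakpoint it rounds does.
  have hpiece : pieceIndex (fun j => (q j : ℝ) / N) x = i := by
    rw [← pieceIndex_eq_of_mem_Ioo hP hi]
    refine pieceIndex_congr fun j => ⟨fun h => (hq j).2.trans ?_, fun h => (hq j).1.trans h⟩
    exact not_lt.1 fun h' => hcell (mem_iUnion.2 ⟨j, h, h'⟩)
  have hfx : f x = f (mid i) := hPf i x hi (mid i)
    ⟨left_lt_add_div_two.2 (hi.1.trans hi.2), add_div_two_lt_right.2 (hi.1.trans hi.2)⟩
  cases b <;> simp [ftilde, upperBracket, hcell, hpiece, hfx] <;> linarith [hv i]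

lemma log_natCast_le_mul_log_of_le_pow {c N k : ℕ} (h : c ≤ N ^ k) :
    Real.log c ≤ k * Real.log N := by
  rcases c.eq_zero_or_pos with rfl | hc
  · simpa using mul_nonneg k.cast_nonneg (Real.log_natCast_nonneg N)
  · rw [← Real.log_pow]
    exact Real.log_le_log (by exact_mod_cast hc) (by exact_mod_cast h)

end StepBracket

open StepBracket in
/-- The δ-upper bracketing entropy of the class `F̃_m` of binary-regression densities whose
regression function is a step function with at most `m-1` change-points is at most
`(2m-1) log⌈m/δ⌉`. -/
theorem bracketing_entropy_bound (m : ℕ) (hm : 1 ≤ m) (δ : ℝ) (hδ : 0 < δ) :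
    ∃ B : Finset ((ℝ × Bool) → ℝ),
      (∀ f : ℝ → ℝ, (∃ k : ℕ, 1 ≤ k ∧ k ≤ m ∧ IsStepWith k f) →
          (∀ x ∈ Icc (0:ℝ) 1, f x ∈ Icc (0:ℝ) 1) →
          ∃ u ∈ B, ∀ᵐ z ∂nuMeas, ftilde f z ≤ u z) ∧
      (∀ u ∈ B, ∫ z, u z ∂nuMeas ≤ 1 + δ) ∧
      Real.log B.card ≤ (2 * (m : ℝ) - 1) * Real.log (Nat.ceil ((m : ℝ) / δ)) := by
  classical
  obtain ⟨n, rfl⟩ : ∃ n, m = n + 1 := ⟨m - 1, by omega⟩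
  set N := ⌈((n + 1 : ℕ) : ℝ) / δ⌉₊
  have hN : 0 < N := Nat.ceil_pos.2 (by positivity)
  refine ⟨Finset.univ.image fun qv : (Fin n → Fin N) × (Fin (n + 1) → Fin N) =>
    upperBracket N qv.1 qv.2, ?_, ?_, ?_⟩
  · rintro f ⟨k, -, hkn, hf⟩ hf01
    obtain ⟨q, v, hqv⟩ := exists_upperBracket_ae_ge hN (hf.mono hkn) hf01
    exact ⟨_, Finset.mem_image_of_mem _ (Finset.mem_univ (q, v)), hqv⟩
  · simp only [Finset.mem_image, Finset.mem_univ, true_and, forall_exists_index]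
    rintro _ ⟨q, v⟩ rfl
    refine (integral_upperBracket_le hN q v).trans ?_
    have hNδ : ((n + 1 : ℕ) : ℝ) ≤ δ * N := (div_le_iff₀' hδ).1 (Nat.le_ceil _)
    gcongr
    exact div_le_of_le_mul₀ (Nat.cast_nonneg _) hδ.le (by exact_mod_cast hNδ)
  · have hcard : (2 * ((n + 1 : ℕ) : ℝ) - 1) = ((n + (n + 1) : ℕ) : ℝ) := by push_cast; ring
    rw [hcard]
    refine log_natCast_le_mul_log_of_le_pow (Finset.card_image_le.trans_eq ?_)
    simp [pow_add]
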